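/- arXiv:1905.05351 — 5 statements merged into one kernel-verified Lean document; each statement's English description precedes it below -/
import Mathlib

section
/- The intrinsic entropy distance between finite probability spaces, defined as the infimum of kd over all couplings, satisfies the triangle inequality: for finite probability spaces X, Y, Z, ikd(X, Z) ≤ ikd(X, Y) + ikd(Y, Z). -/
open scoped BigOperators

/-- Shannon entropy of a finitely supported probability distribution. -/
noncomputable def shannonEntropy {α : Type*} [Fintype α] (p : α → ℝ) : ℝ :=
  -∑ a, p a * Real.log (p a)

/-- `p` is a probability distribution on the finite type `α`. -/
def IsProb {α : Type*} [Fintype α] (p : α → ℝ) : Prop :=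
  (∀ a, 0 ≤ p a) ∧ ∑ a, p a = 1

/-- `K` is a coupling of `p` and `q`. -/
def IsCoupling {α β : Type*} [Fintype α] [Fintype β]
    (p : α → ℝ) (q : β → ℝ) (K : α × β → ℝ) : Prop :=
  IsProb K ∧ (∀ a, ∑ b, K (a, b) = p a) ∧ (∀ b, ∑ a, K (a, b) = q b)

/-- The entropy distance of a coupling `K` of `p` and `q`. -/
noncomputable def kd {α β : Type*} [Fintype α] [Fintype β]
    (p : α → ℝ) (q : β → ℝ) (K : α × β → ℝ) : ℝ :=
  (shannonEntropy K - shannonEntropy p) + (shannonEntropy K - shannonEntropy q)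

/-- The intrinsic entropy distance: the infimum of `kd` over all couplings. -/
noncomputable def ikd {α β : Type*} [Fintype α] [Fintype β]
    (p : α → ℝ) (q : β → ℝ) : ℝ :=
  sInf { d : ℝ | ∃ K : α × β → ℝ, IsCoupling p q K ∧ d = kd p q K }

/-!
Glue a coupling `K₁` of `X, Y` and a coupling `K₂` of `Y, Z` along `Y` into the distribution
`K₁(x, y) K₂(y, z) / p_Y(y)` on `X × Z × Y`, under which `X` and `Z` are conditionally independent
given `Y`. Fibrewise over `y` its entropy splits, giving `H(K₁) + H(K₂) - H(Y)`. Its `X × Z`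
marginal `K` is a coupling of `X, Z` with `H(K)` at most that, so `kd(K) ≤ kd(K₁) + kd(K₂)`, and
taking infima over `K₁` and `K₂` gives the triangle inequality.
-/

open Real Finset

lemma shannonEntropy_eq_sum_negMulLog {α : Type*} [Fintype α] (p : α → ℝ) :
    shannonEntropy p = ∑ a, negMulLog (p a) := by
  simp [shannonEntropy, negMulLog, sum_neg_distrib]

lemma shannonEntropy_comp_equiv {α β : Type*} [Fintype α] [Fintype β] (e : α ≃ β)
    (p : β → ℝ) : shannonEntropy (p ∘ e) = shannonEntropy p := by
  simp only [shannonEntropy_eq_sum_negMulLog]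
  exact Fintype.sum_equiv e _ _ fun _ => rfl

lemma negMulLog_sum_le_sum_negMulLog {ι : Type*} (s : Finset ι) {f : ι → ℝ}
    (hf : ∀ i ∈ s, 0 ≤ f i) : negMulLog (∑ i ∈ s, f i) ≤ ∑ i ∈ s, negMulLog (f i) := by
  simp only [negMulLog, neg_mul, sum_mul, ← sum_neg_distrib]
  refine sum_le_sum fun i hi => ?_
  rcases (hf i hi).eq_or_lt with h0 | hpos
  · simp [← h0]
  · exact neg_le_neg <| mul_le_mul_of_nonneg_left (log_le_log hpos (single_le_sum hf hi)) hpos.le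

lemma shannonEntropy_fst_marginal_le {α β : Type*} [Fintype α] [Fintype β] {K : α × β → ℝ}
    (hK : ∀ ab, 0 ≤ K ab) : shannonEntropy (fun a => ∑ b, K (a, b)) ≤ shannonEntropy K := by
  simp only [shannonEntropy_eq_sum_negMulLog, Fintype.sum_prod_type]
  exact sum_le_sum fun a _ => negMulLog_sum_le_sum_negMulLog _ fun b _ => hK (a, b)

lemma shannonEntropy_snd_marginal_le {α β : Type*} [Fintype α] [Fintype β] {K : α × β → ℝ}
    (hK : ∀ ab, 0 ≤ K ab) : shannonEntropy (fun b => ∑ a, K (a, b)) ≤ shannonEntropy K := by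
  have h := shannonEntropy_fst_marginal_le (K := K ∘ Equiv.prodComm β α) fun _ => hK _
  rwa [shannonEntropy_comp_equiv] at h

lemma sum_sum_negMulLog_mul_div {ι κ : Type*} [Fintype ι] [Fintype κ] {a : ι → ℝ} {b : κ → ℝ}
    {c : ℝ} (ha : ∀ i, 0 ≤ a i) (hb : ∀ j, 0 ≤ b j) (ha_sum : ∑ i, a i = c)
    (hb_sum : ∑ j, b j = c) :
    ∑ i, ∑ j, negMulLog (a i * b j / c) =
      ∑ i, negMulLog (a i) + ∑ j, negMulLog (b j) - negMulLog c := by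
  rcases eq_or_ne c 0 with rfl | hc
  · simp [(Fintype.sum_eq_zero_iff_of_nonneg ha).1 ha_sum,
      (Fintype.sum_eq_zero_iff_of_nonneg hb).1 hb_sum]
  · simp only [div_eq_mul_inv, negMulLog_mul, mul_add, sum_add_distrib, ← sum_mul, ← mul_sum,
      ha_sum, hb_sum]
    simp only [negMulLog, log_inv]
    field_simp
    ring

lemma IsProb.isCoupling_mul {α β : Type*} [Fintype α] [Fintype β] {p : α → ℝ} {q : β → ℝ}
    (hp : IsProb p) (hq : IsProb q) : IsCoupling p q fun ab => p ab.1 * q ab.2 := by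
  refine ⟨⟨fun ab => mul_nonneg (hp.1 _) (hq.1 _), ?_⟩, fun a => ?_, fun b => ?_⟩
  · simp [Fintype.sum_prod_type, ← mul_sum, hp.2, hq.2]
  · simp [← mul_sum, hq.2]
  · simp [← sum_mul, hp.2]

namespace IsCoupling

variable {α β : Type*} [Fintype α] [Fintype β] {p : α → ℝ} {q : β → ℝ} {K : α × β → ℝ}

lemma nonneg (h : IsCoupling p q K) (ab : α × β) : 0 ≤ K ab := h.1.1 ab

lemma right_nonneg (h : IsCoupling p q K) (b : β) : 0 ≤ q b :=
  h.2.2 b ▸ sum_nonneg fun a _ => h.nonneg (a, b)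

lemma eq_zero_of_left_eq_zero (h : IsCoupling p q K) {a : α} (ha : p a = 0) (b : β) :
    K (a, b) = 0 :=
  congrFun ((Fintype.sum_eq_zero_iff_of_nonneg fun b => h.nonneg (a, b)).1 (ha ▸ h.2.1 a)) b

lemma eq_zero_of_right_eq_zero (h : IsCoupling p q K) {b : β} (hb : q b = 0) (a : α) :
    K (a, b) = 0 :=
  congrFun ((Fintype.sum_eq_zero_iff_of_nonneg fun a => h.nonneg (a, b)).1 (hb ▸ h.2.2 b)) a

lemma kd_nonneg (h : IsCoupling p q K) : 0 ≤ kd p q K := by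
  have hp := shannonEntropy_fst_marginal_le h.nonneg
  have hq := shannonEntropy_snd_marginal_le h.nonneg
  rw [funext h.2.1] at hp
  rw [funext h.2.2] at hq
  unfold kd
  linarith

end IsCoupling

section Glue

variable {X Y Z : Type*} [Fintype X] [Fintype Y] [Fintype Z]
  {pX : X → ℝ} {pY : Y → ℝ} {pZ : Z → ℝ} {K1 : X × Y → ℝ} {K2 : Y × Z → ℝ}

variable (pY K1 K2) in
/-- Division by `pY y = 0` gives `0`, which is harmless since then `K1 (x, y) = K2 (y, z) = 0`. -/
noncomputable def glue (xzy : (X × Z) × Y) : ℝ :=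
  K1 (xzy.1.1, xzy.2) * K2 (xzy.2, xzy.1.2) / pY xzy.2

variable (h1 : IsCoupling pX pY K1) (h2 : IsCoupling pY pZ K2)
include h1 h2

lemma glue_nonneg (xzy : (X × Z) × Y) : 0 ≤ glue pY K1 K2 xzy :=
  div_nonneg (mul_nonneg (h1.nonneg _) (h2.nonneg _)) (h1.right_nonneg _)

lemma sum_glue_right (x : X) (y : Y) : ∑ z, glue pY K1 K2 ((x, z), y) = K1 (x, y) := by
  by_cases hy : pY y = 0
  · simp [glue, hy, h1.eq_zero_of_right_eq_zero hy]
  · simp only [glue, ← sum_div, ← mul_sum, h2.2.1 y, mul_div_cancel_right₀ _ hy]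

lemma sum_glue_left (z : Z) (y : Y) : ∑ x, glue pY K1 K2 ((x, z), y) = K2 (y, z) := by
  by_cases hy : pY y = 0
  · simp [glue, hy, h2.eq_zero_of_left_eq_zero hy]
  · simp only [glue, ← sum_div, ← sum_mul, h1.2.2 y, mul_div_cancel_left₀ _ hy]

lemma shannonEntropy_glue :
    shannonEntropy (glue pY K1 K2) =
      shannonEntropy K1 + shannonEntropy K2 - shannonEntropy pY := by
  have hfiber (y : Y) : ∑ x, ∑ z, negMulLog (glue pY K1 K2 ((x, z), y)) =
      ∑ x, negMulLog (K1 (x, y)) + ∑ z, negMulLog (K2 (y, z)) - negMulLog (pY y) :=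
    sum_sum_negMulLog_mul_div (a := fun x => K1 (x, y)) (b := fun z => K2 (y, z))
      (fun x => h1.nonneg (x, y)) (fun z => h2.nonneg (y, z))
      (h1.2.2 y) (h2.2.1 y)
  simp only [shannonEntropy_eq_sum_negMulLog, Fintype.sum_prod_type]
  rw [sum_comm (f := fun x y => negMulLog (K1 (x, y))), ← sum_add_distrib, ← sum_sub_distrib,
    ← sum_congr rfl fun y _ => hfiber y]
  exact (sum_congr rfl fun x _ => sum_comm).trans sum_comm

lemma isCoupling_sum_glue : IsCoupling pX pZ fun xz => ∑ y, glue pY K1 K2 (xz, y) := by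
  have hX (x : X) : ∑ z, ∑ y, glue pY K1 K2 ((x, z), y) = pX x := by
    rw [sum_comm, ← h1.2.1 x]
    exact sum_congr rfl fun y _ => sum_glue_right h1 h2 x y
  have hZ (z : Z) : ∑ x, ∑ y, glue pY K1 K2 ((x, z), y) = pZ z := by
    rw [sum_comm, ← h2.2.2 z]
    exact sum_congr rfl fun y _ => sum_glue_left h1 h2 z y
  refine ⟨⟨fun xz => sum_nonneg fun y _ => glue_nonneg h1 h2 _, ?_⟩, hX, hZ⟩
  simpa only [Fintype.sum_prod_type, hX, h1.2.1] using h1.1.2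

lemma kd_sum_glue_le :
    kd pX pZ (fun xz => ∑ y, glue pY K1 K2 (xz, y)) ≤ kd pX pY K1 + kd pY pZ K2 := by
  have hmarg := shannonEntropy_fst_marginal_le (glue_nonneg h1 h2)
  have hglue := shannonEntropy_glue h1 h2
  unfold kd
  linarith

end Glue

section Ikd

variable {α β : Type*} [Fintype α] [Fintype β] {p : α → ℝ} {q : β → ℝ}

lemma ikd_le_kd {K : α × β → ℝ} (hK : IsCoupling p q K) : ikd p q ≤ kd p q K :=
  csInf_le ⟨0, by rintro _ ⟨K', hK', rfl⟩; exact hK'.kd_nonneg⟩ ⟨K, hK, rfl⟩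

lemma le_ikd {d : ℝ} (hpq : ∃ K, IsCoupling p q K) (hd : ∀ K, IsCoupling p q K → d ≤ kd p q K) :
    d ≤ ikd p q := by
  obtain ⟨K, hK⟩ := hpq
  refine le_csInf ⟨_, K, hK, rfl⟩ ?_
  rintro _ ⟨K', hK', rfl⟩
  exact hd K' hK'

end Ikd

/-- The intrinsic entropy distance satisfies the triangle inequality. -/
theorem stmt_4 {X Y Z : Type*} [Fintype X] [Fintype Y] [Fintype Z]
    (pX : X → ℝ) (pY : Y → ℝ) (pZ : Z → ℝ)
    (hX : IsProb pX) (hY : IsProb pY) (hZ : IsProb pZ) :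
    ikd pX pZ ≤ ikd pX pY + ikd pY pZ := by
  rw [← sub_le_iff_le_add]
  refine le_ikd ⟨_, hX.isCoupling_mul hY⟩ fun K1 h1 => ?_
  rw [sub_le_comm]
  refine le_ikd ⟨_, hY.isCoupling_mul hZ⟩ fun K2 h2 => ?_
  rw [sub_le_iff_le_add']
  exact (ikd_le_kd (isCoupling_sum_glue h1 h2)).trans (kd_sum_glue_le h1 h2)
end

section
/- (Ingleton inequality for abelian groups) Let G be a finite abelian group and H1, H2, H3, H4 subgroups. Define for a family of subgroups the function h(S) := log(|G| / |⋂_{i∈S} H_i|) for nonempty S ⊆ {1,2,3,4}. Then −I(1;2) + I(1;2|3) + I(1;2|4) + I(3;4) ≥ 0, where I(i;j) := h({i}) + h({j}) − h({i,j}) and I(i;j|k) := h({i,k}) + h({j,k}) − h({i,j,k}) − h({k}). -/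
/-!
With `a(S) = log |⋂_{i∈S} H_i|`, the Ingleton expression equals
`a₁ + a₂ + a₃₄ + a₁₂₃ + a₁₂₄ - a₁₂ - a₁₃ - a₂₃ - a₁₄ - a₂₄`, the logarithm of a ratio of
subgroup orders. In an abelian group `|A ⊔ B| |A ⊓ B| = |A| |B|`. Applied to
`X = (A ⊓ C) ⊔ (B ⊓ C)` and `Y = (A ⊓ D) ⊔ (B ⊓ D)` it gives `|X| |Y| = |X ⊔ Y| |X ⊓ Y|`, and
`X ⊔ Y ≤ A ⊔ B`, `X ⊓ Y ≤ C ⊓ D` bound this by `|A ⊔ B| |C ⊓ D|`; expanding `|X|`, `|Y|` and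
`|A ⊔ B|` by the same product formula yields the inequality.
-/

namespace Subgroup

theorem card_sup_mul_card_inf {G : Type*} [Group G] (A B : Subgroup G) [B.Normal] :
    Nat.card ↥(A ⊔ B) * Nat.card ↥(A ⊓ B) = Nat.card A * Nat.card B := by
  have hB : Nat.card B * B.relIndex A = Nat.card ↥(A ⊔ B) := by
    simpa only [relIndex_bot_left, relIndex_sup_right] using
      relIndex_mul_relIndex ⊥ B (A ⊔ B) bot_le le_sup_right
  have hA : Nat.card ↥(A ⊓ B) * B.relIndex A = Nat.card A := by
    simpa only [relIndex_bot_left, inf_relIndex_left] using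
      relIndex_mul_relIndex ⊥ (A ⊓ B) A bot_le inf_le_left
  rw [← hA, ← hB]; ring

variable {G : Type*} [CommGroup G]

theorem card_inf_sup_inf_mul_card_inf (A B C : Subgroup G) :
    Nat.card ↥(A ⊓ C ⊔ B ⊓ C) * Nat.card ↥(A ⊓ (B ⊓ C)) =
      Nat.card ↥(A ⊓ C) * Nat.card ↥(B ⊓ C) := by
  rw [← inf_assoc, inf_inf_distrib_right, card_sup_mul_card_inf]

theorem ingleton_card_le [Finite G] (A B C D : Subgroup G) :
    Nat.card ↥(A ⊓ C) * Nat.card ↥(B ⊓ C) * (Nat.card ↥(A ⊓ D) * Nat.card ↥(B ⊓ D)) *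
        Nat.card ↥(A ⊓ B) ≤
      Nat.card A * Nat.card B * Nat.card ↥(C ⊓ D) *
        (Nat.card ↥(A ⊓ (B ⊓ C)) * Nat.card ↥(A ⊓ (B ⊓ D))) := by
  set X := A ⊓ C ⊔ B ⊓ C
  set Y := A ⊓ D ⊔ B ⊓ D
  have hsup : X ⊔ Y ≤ A ⊔ B :=
    sup_le (sup_le_sup inf_le_left inf_le_left) (sup_le_sup inf_le_left inf_le_left)
  have hinf : X ⊓ Y ≤ C ⊓ D :=
    inf_le_inf (sup_le inf_le_right inf_le_right) (sup_le inf_le_right inf_le_right)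
  calc _ = Nat.card X * Nat.card Y * Nat.card ↥(A ⊓ B) *
          (Nat.card ↥(A ⊓ (B ⊓ C)) * Nat.card ↥(A ⊓ (B ⊓ D))) := by
        rw [← card_inf_sup_inf_mul_card_inf A B C, ← card_inf_sup_inf_mul_card_inf A B D]; ring
    _ = Nat.card ↥(X ⊔ Y) * Nat.card ↥(X ⊓ Y) * Nat.card ↥(A ⊓ B) *
          (Nat.card ↥(A ⊓ (B ⊓ C)) * Nat.card ↥(A ⊓ (B ⊓ D))) := by
        rw [card_sup_mul_card_inf]
    _ ≤ Nat.card ↥(A ⊔ B) * Nat.card ↥(C ⊓ D) * Nat.card ↥(A ⊓ B) *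
          (Nat.card ↥(A ⊓ (B ⊓ C)) * Nat.card ↥(A ⊓ (B ⊓ D))) := by
        gcongr <;> exact card_le_of_le ‹_›
    _ = _ := by rw [mul_right_comm _ (Nat.card ↥(C ⊓ D)), card_sup_mul_card_inf]

end Subgroup

/-- Ingleton inequality for finite abelian groups: with
`h(S) = log(|G| / |⋂_{i∈S} H_i|)`, the Ingleton expression
`−I(1;2) + I(1;2|3) + I(1;2|4) + I(3;4)` is nonnegative. -/
theorem stmt_8 {G : Type*} [CommGroup G] [Fintype G]
    (H : Fin 4 → Subgroup G) :
    let h : Finset (Fin 4) → ℝ := fun S =>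
      Real.log (Nat.card G : ℝ) - Real.log (Nat.card (⨅ i ∈ S, H i : Subgroup G) : ℝ)
    let I : Fin 4 → Fin 4 → ℝ := fun i j => h {i} + h {j} - h {i, j}
    let Ic : Fin 4 → Fin 4 → Fin 4 → ℝ := fun i j k =>
      h {i, k} + h {j, k} - h {i, j, k} - h {k}
    0 ≤ -I 0 1 + Ic 0 1 2 + Ic 0 1 3 + I 2 3 := by
  intro h I Ic
  have key := Real.log_le_log (Nat.cast_pos.mpr (by apply_rules [Nat.mul_pos, Nat.card_pos]))
    (Nat.cast_le (α := ℝ).mpr (Subgroup.ingleton_card_le (H 0) (H 1) (H 2) (H 3)))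
  simp only [Nat.cast_mul, Real.log_mul, ne_eq, mul_eq_zero, Nat.cast_eq_zero, Nat.card_pos.ne',
    or_self, not_false_eq_true] at key
  simp only [I, Ic, h, Finset.iInf_insert, Finset.iInf_singleton]
  linarith
end

section
/- The entropy vector a_14 := (1,1,1,1; 2,2,2,2,2,2; 3,3,3,3; 3) ∈ R^{Λ_4} (coordinates scaled by 1/log 3) is realized by the abelian group construction: take G = (Z_3)^3 with standard generators χ_1, χ_2, χ_3, and subgroups H_1 = ⟨χ_1, χ_2⟩, H_2 = ⟨χ_2, χ_3⟩, H_3 = ⟨χ_3, χ_1⟩, H_4 = ⟨χ_1 + χ_2, χ_2 + χ_3⟩; then for every nonempty S ⊆ {1,2,3,4}, log_3(|G| / |⋂_{i∈S} H_i|) equals the corresponding coordinate of a_14, i.e., it equals 1 if |S| = 1, 2 if |S| = 2, and 3 if |S| ≥ 3. -/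
/-!
Each `H i` is the orthogonal complement `(normalVec i)^⊥` of a vector of `𝔽₃³`, and the four
normal vectors are in general position: any three of them are linearly independent. Hence the
intersection of `k` of the `H i` has order `3 ^ (3 - k)` for `k ≤ 3` and is trivial for `k ≥ 3`;
these orders are checked by evaluation in the 27-element group.
-/

section Lattice

variable {ι α : Type*} [CompleteLattice α] (f : ι → α) {S : Finset ι}

theorem Finset.exists_iInf_eq_of_card_eq_one (hS : S.card = 1) : ∃ i, ⨅ k ∈ S, f k = f i := by
  obtain ⟨i, rfl⟩ := Finset.card_eq_one.1 hS
  exact ⟨i, Finset.iInf_singleton i f⟩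

theorem Finset.exists_iInf_eq_inf_of_card_eq_two [DecidableEq ι] (hS : S.card = 2) :
    ∃ i j, i ≠ j ∧ ⨅ k ∈ S, f k = f i ⊓ f j := by
  obtain ⟨i, j, hij, rfl⟩ := Finset.card_eq_two.1 hS
  exact ⟨i, j, hij, by rw [Finset.iInf_insert, Finset.iInf_singleton]⟩

theorem Finset.exists_iInf_le_inf_inf_of_two_lt_card (hS : 2 < S.card) :
    ∃ i j k, i ≠ j ∧ i ≠ k ∧ j ≠ k ∧ ⨅ l ∈ S, f l ≤ f i ⊓ f j ⊓ f k := by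
  obtain ⟨i, hi, j, hj, k, hk, hij, hik, hjk⟩ := Finset.two_lt_card.1 hS
  exact ⟨i, j, k, hij, hik, hjk, le_inf (le_inf (biInf_le f hi) (biInf_le f hj)) (biInf_le f hk)⟩

end Lattice

theorem Real.logb_pow_div_pow {b : ℝ} (hb : 1 < b) {m n : ℕ} (hnm : n ≤ m) :
    logb b (b ^ m / b ^ n) = (m - n : ℕ) := by
  rw [div_eq_mul_inv, ← pow_sub₀ b (by positivity) hnm, logb_pow, logb_self_eq_one hb, mul_one]

instance AddSubgroup.decidableMemInf {G : Type*} [AddGroup G] (A B : AddSubgroup G)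
    [DecidablePred (· ∈ A)] [DecidablePred (· ∈ B)] : DecidablePred (· ∈ A ⊓ B) := fun _ =>
  decidable_of_iff _ mem_inf.symm

theorem AddSubgroup.mem_closure_pair_of_nsmul_add_nsmul {A : Type*} [AddCommGroup A] {a b v : A}
    (m n : ℕ) (h : m • a + n • b = v) : v ∈ closure {a, b} :=
  mem_closure_pair.2 ⟨m, n, by simpa only [natCast_zsmul] using h⟩

section Perp

variable {n R : Type*} [Fintype n] [NonUnitalNonAssocRing R]

def perp (c : n → R) : AddSubgroup (n → R) := (AddMonoidHom.mk' (c ⬝ᵥ ·) (dotProduct_add c)).ker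

theorem mem_perp {c v : n → R} : v ∈ perp c ↔ c ⬝ᵥ v = 0 := Iff.rfl

instance [DecidableEq R] (c : n → R) : DecidablePred (· ∈ perp c) := fun _ =>
  decidable_of_iff _ mem_perp.symm

end Perp

abbrev V := Fin 3 → ZMod 3

def χ (i : Fin 3) : V := Pi.single i 1

def H : Fin 4 → AddSubgroup V := ![
  AddSubgroup.closure {χ 0, χ 1},
  AddSubgroup.closure {χ 1, χ 2},
  AddSubgroup.closure {χ 2, χ 0},
  AddSubgroup.closure {χ 0 + χ 1, χ 1 + χ 2}]

def normalVec : Fin 4 → V := ![![0, 0, 1], ![1, 0, 0], ![0, 1, 0], ![1, -1, 1]]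

theorem H_le_perp (i : Fin 4) : H i ≤ perp (normalVec i) := by
  fin_cases i <;> refine (AddSubgroup.closure_le _).2 ?_ <;>
    simp only [Set.insert_subset_iff, Set.singleton_subset_iff, SetLike.mem_coe] <;> decide

theorem perp_le_H (i : Fin 4) : perp (normalVec i) ≤ H i := by
  intro v hv
  fin_cases i
  · exact AddSubgroup.mem_closure_pair_of_nsmul_add_nsmul (v 0).val (v 1).val (by revert v; decide)
  · exact AddSubgroup.mem_closure_pair_of_nsmul_add_nsmul (v 1).val (v 2).val (by revert v; decide)
  · exact AddSubgroup.mem_closure_pair_of_nsmul_add_nsmul (v 2).val (v 0).val (by revert v; decide)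
  · exact AddSubgroup.mem_closure_pair_of_nsmul_add_nsmul (v 0).val (v 2).val (by revert v; decide)

theorem H_eq_perp (i : Fin 4) : H i = perp (normalVec i) :=
  le_antisymm (H_le_perp i) (perp_le_H i)

theorem card_V : Nat.card V = 3 ^ 3 := by
  simp only [Nat.card_eq_fintype_card]; decide

theorem card_H (i : Fin 4) : Nat.card (H i) = 3 ^ 2 := by
  rw [H_eq_perp, Nat.card_eq_fintype_card]; revert i; decide

theorem card_H_inf_H {i j : Fin 4} (hij : i ≠ j) :
    Nat.card (H i ⊓ H j : AddSubgroup V) = 3 ^ 1 := by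
  rw [H_eq_perp, H_eq_perp, Nat.card_eq_fintype_card]; revert i j; decide

theorem H_inf_H_inf_H_eq_bot {i j k : Fin 4} (hij : i ≠ j) (hik : i ≠ k) (hjk : j ≠ k) :
    H i ⊓ H j ⊓ H k = ⊥ := by
  simp only [H_eq_perp, eq_bot_iff, SetLike.le_def, AddSubgroup.mem_bot]
  revert i j k; decide

theorem card_iInf_H {S : Finset (Fin 4)} (hS : S.Nonempty) :
    Nat.card (⨅ i ∈ S, H i : AddSubgroup V) =
      if S.card = 1 then 3 ^ 2 else if S.card = 2 then 3 ^ 1 else 3 ^ 0 := by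
  split_ifs with h1 h2
  · obtain ⟨i, hi⟩ := S.exists_iInf_eq_of_card_eq_one H h1
    rw [hi, card_H]
  · obtain ⟨i, j, hij, hi⟩ := S.exists_iInf_eq_inf_of_card_eq_two H h2
    rw [hi, card_H_inf_H hij]
  · have h3 : 2 < S.card := by have := hS.card_pos; omega
    obtain ⟨i, j, k, hij, hik, hjk, hle⟩ := S.exists_iInf_le_inf_inf_of_two_lt_card H h3
    rw [H_inf_H_inf_H_eq_bot hij hik hjk, le_bot_iff] at hle
    rw [hle, AddSubgroup.card_bot, pow_zero]

/-- The vertex `a₁₄` of the non-Ingleton simplex is realized by the abelian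
group `G = (ℤ₃)³` with subgroups `H₁ = ⟨χ₁,χ₂⟩`, `H₂ = ⟨χ₂,χ₃⟩`,
`H₃ = ⟨χ₃,χ₁⟩`, `H₄ = ⟨χ₁+χ₂, χ₂+χ₃⟩`: for every nonempty `S ⊆ {1,2,3,4}`,
`log₃(|G| / |⋂_{i∈S} H_i|)` equals `1` if `|S| = 1`, `2` if `|S| = 2`, and
`3` if `|S| ≥ 3`. -/
theorem stmt_14 :
    let G := Fin 3 → ZMod 3
    let χ : Fin 3 → G := fun i => Pi.single i 1
    let H : Fin 4 → AddSubgroup G := ![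
      AddSubgroup.closure {χ 0, χ 1},
      AddSubgroup.closure {χ 1, χ 2},
      AddSubgroup.closure {χ 2, χ 0},
      AddSubgroup.closure {χ 0 + χ 1, χ 1 + χ 2}]
    ∀ S : Finset (Fin 4), S.Nonempty →
      Real.logb 3 ((Nat.card G : ℝ) / (Nat.card (⨅ i ∈ S, H i : AddSubgroup G) : ℝ))
        = if S.card = 1 then 1 else if S.card = 2 then 2 else 3 := by
  show ∀ S : Finset (Fin 4), S.Nonempty →
    Real.logb 3 ((Nat.card V : ℝ) / (Nat.card (⨅ i ∈ S, H i : AddSubgroup V) : ℝ)) = _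
  intro S hS
  rw [card_iInf_H hS, card_V]
  split_ifs <;> simp only [Nat.cast_pow, Nat.cast_ofNat] <;>
    rw [Real.logb_pow_div_pow (by norm_num) (by norm_num)] <;> norm_num
end

section
/- For a sequence of nonnegative reals (a_n) satisfying the quasi-linearity bound a_{m+n} ≤ a_m + a_n + C(m+n)^{3/4} for all m, n ≥ 1 and some constant C ≥ 0, the limit lim_{n→∞} a_n/n exists. -/
/-!
Doubling costs little: from `a (2m) ≤ 2 a m + C (2m)^α` one gets, summing a geometric series,
`a (2^k m) / (2^k m) ≤ a m / m + O(m^(α-1))` uniformly in `k`. Every `n ≥ m` splits as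
`2^k m + r` with `r < n / 2`; recursing on `r`, the errors `C n^α` again sum geometrically, to
`O(n^α) = o(n)`. Hence `limsup a n / n ≤ a m / m + O(m^(α-1))` for every `m`, so the limsup is at
most the liminf.
-/

open Filter Topology

theorem tendsto_rpow_div_natCast_atTop {α : ℝ} (hα : α < 1) :
    Tendsto (fun n : ℕ => (n : ℝ) ^ α / n) atTop (𝓝 0) := by
  have h := (tendsto_rpow_neg_atTop (sub_pos.2 hα)).comp tendsto_natCast_atTop_atTop
  refine h.congr' ?_
  filter_upwards [eventually_gt_atTop 0] with n hn
  simp [Real.rpow_sub_one (Nat.cast_ne_zero.2 hn.ne')]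

theorem exists_tendsto_of_eventually_le_add {ι : Type*} {l : Filter ι} [l.NeBot] {f : ι → ℝ}
    (hbdd : IsBoundedUnder (· ≥ ·) l f)
    (h : ∀ ε > 0, ∀ᶠ m in l, ∀ᶠ n in l, f n ≤ f m + ε) :
    ∃ L, Tendsto f l (𝓝 L) := by
  have hbdd_above : IsBoundedUnder (· ≤ ·) l f := by
    obtain ⟨m, hm⟩ := (h 1 one_pos).exists
    exact isBoundedUnder_of_eventually_le hm
  have hlimsup : ∀ ε > 0, ∀ᶠ m in l, limsup f l ≤ f m + ε := fun ε hε =>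
    (h ε hε).mono fun m hm => limsup_le_of_le hbdd.isCoboundedUnder_le hm
  refine ⟨limsup f l, tendsto_order.2 ⟨fun b hb => ?_,
    fun b hb => eventually_lt_of_limsup_lt hb hbdd_above⟩⟩
  filter_upwards [hlimsup ((limsup f l - b) / 2) (by linarith)] with m hm
  linarith

theorem Nat.exists_two_pow_mul_le_lt {m n : ℕ} (hm : 0 < m) (hmn : m ≤ n) :
    ∃ k, 2 ^ k * m ≤ n ∧ n < 2 ^ (k + 1) * m := by
  refine ⟨Nat.log 2 (n / m), ?_, ?_⟩
  · exact (Nat.le_div_iff_mul_le hm).1 (Nat.pow_log_le_self 2 (Nat.div_pos hmn hm).ne')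
  · exact (Nat.div_lt_iff_lt_mul hm).1 (Nat.lt_pow_succ_log_self (by norm_num) _)

def ApproxSubadditive (a : ℕ → ℝ) (C α : ℝ) : Prop :=
  ∀ m n : ℕ, 1 ≤ m → 1 ≤ n → a (m + n) ≤ a m + a n + C * ((m + n : ℝ)) ^ α

namespace ApproxSubadditive

variable {a : ℕ → ℝ} {C α : ℝ}

theorem apply_two_pow_mul_le (h : ApproxSubadditive a C α) {D : ℝ}
    (hD : C * 2 ^ α ≤ (2 - 2 ^ α) * D) {m : ℕ} (hm : 0 < m) (k : ℕ) :
    a (2 ^ k * m) ≤ 2 ^ k * (a m + D * (m : ℝ) ^ α) - D * ((2 ^ k * m : ℕ) : ℝ) ^ α := by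
  induction k with
  | zero => simp
  | succ k ih =>
    have hpos : 1 ≤ 2 ^ k * m := Nat.one_le_iff_ne_zero.2 (by positivity)
    have hsum := h _ _ hpos hpos
    set x : ℝ := ((2 ^ k * m : ℕ) : ℝ) with hx
    have hdouble : ((2 ^ (k + 1) * m : ℕ) : ℝ) ^ α = 2 ^ α * x ^ α := by
      rw [← Real.mul_rpow (by norm_num) (by positivity)]
      push_cast [hx]; ring_nf
    rw [show 2 ^ k * m + 2 ^ k * m = 2 ^ (k + 1) * m by ring, show x + x = 2 * x by ring,
      Real.mul_rpow (by norm_num) (by positivity)] at hsum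
    rw [hdouble, pow_succ (2 : ℝ)]
    linear_combination hsum + 2 * ih + x ^ α * hD

theorem le_of_le_two_pow_mul (h : ApproxSubadditive a C α) (hα : 0 ≤ α) {m : ℕ} (hm : 0 < m)
    {β B K : ℝ} (hB : 0 ≤ B) (hK : 0 ≤ K) (hKC : C * 2 ^ α ≤ (2 ^ α - 1) * K)
    (hsmall : ∀ r, 0 < r → r < m → a r ≤ β * r + B)
    (hdyadic : ∀ k, a (2 ^ k * m) ≤ β * ((2 ^ k * m : ℕ) : ℝ)) :
    ∀ n, 0 < n → a n ≤ β * n + B + K * (n : ℝ) ^ α := by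
  intro n
  induction n using Nat.strong_induction_on with
  | _ n ih =>
  intro hn
  have hKn : 0 ≤ K * (n : ℝ) ^ α := by positivity
  rcases lt_or_ge n m with hnm | hmn
  · linarith [hsmall n hn hnm]
  obtain ⟨k, hle, hlt⟩ := Nat.exists_two_pow_mul_le_lt hm hmn
  obtain ⟨r, rfl⟩ := Nat.exists_eq_add_of_le hle
  rcases Nat.eq_zero_or_pos r with rfl | hr
  · rw [add_zero] at hKn ⊢
    linarith [hdyadic k]
  set p := 2 ^ k * m
  -- the remainder is less than half of `p + r`, which makes the errors decay geometrically
  have hr2 : 2 * r ≤ p + r := by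
    have : 2 ^ (k + 1) * m = 2 * p := by rw [pow_succ]; ring
    omega
  have hsum := h p r (Nat.one_le_iff_ne_zero.2 (by positivity)) hr
  have hrec := ih r (by omega) hr
  have hpow : 2 ^ α * (r : ℝ) ^ α ≤ ((p : ℝ) + r) ^ α := by
    rw [← Real.mul_rpow (by norm_num) (by positivity)]
    exact Real.rpow_le_rpow (by positivity) (by exact_mod_cast hr2) hα
  push_cast
  have herr : K * (r : ℝ) ^ α + C * ((p : ℝ) + r) ^ α ≤ K * ((p : ℝ) + r) ^ α := by
    refine le_of_mul_le_mul_left ?_ (by positivity : (0 : ℝ) < 2 ^ α)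
    linear_combination K * hpow + ((p : ℝ) + r) ^ α * hKC
  linarith [hdyadic k]

theorem eventually_div_le (h : ApproxSubadditive a C α) (hC : 0 ≤ C) (hα₀ : 0 < α)
    (hα₁ : α < 1) {m : ℕ} (hm : 0 < m) {ε : ℝ} (hε : 0 < ε) :
    ∀ᶠ n : ℕ in atTop,
      a n / n ≤ a m / m + C * 2 ^ α / (2 - 2 ^ α) * ((m : ℝ) ^ α / m) + ε := by
  have h2α₀ : 1 < (2 : ℝ) ^ α := Real.one_lt_rpow (by norm_num) hα₀
  have h2α₁ : (2 : ℝ) ^ α < 2 := by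
    simpa using Real.rpow_lt_rpow_of_exponent_lt (by norm_num : (1 : ℝ) < 2) hα₁
  set D := C * 2 ^ α / (2 - 2 ^ α)
  set K := C * 2 ^ α / (2 ^ α - 1)
  set β := (a m + D * (m : ℝ) ^ α) / m
  set B := ∑ r ∈ Finset.range m, |a r - β * r|
  have hD : C * 2 ^ α ≤ (2 - 2 ^ α) * D := by
    rw [mul_div_cancel₀ _ (sub_pos.2 h2α₁).ne']
  have hKC : C * 2 ^ α ≤ (2 ^ α - 1) * K := by
    rw [mul_div_cancel₀ _ (sub_pos.2 h2α₀).ne']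
  have hD₀ : 0 ≤ D := div_nonneg (by positivity) (sub_pos.2 h2α₁).le
  have hdyadic (k : ℕ) : a (2 ^ k * m) ≤ β * ((2 ^ k * m : ℕ) : ℝ) := by
    have hβk : β * ((2 ^ k * m : ℕ) : ℝ) = 2 ^ k * (a m + D * (m : ℝ) ^ α) := by
      simp only [β]; push_cast; field_simp
    have : 0 ≤ D * ((2 ^ k * m : ℕ) : ℝ) ^ α := by positivity
    linarith [h.apply_two_pow_mul_le hD hm k]
  have hsmall (r : ℕ) (_ : 0 < r) (hr : r < m) : a r ≤ β * r + B := by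
    have := (le_abs_self _).trans
      (Finset.single_le_sum (f := fun r => |a r - β * r|) (fun _ _ => abs_nonneg _)
        (Finset.mem_range.2 hr))
    linarith
  have hbound := h.le_of_le_two_pow_mul hα₀.le hm (Finset.sum_nonneg fun _ _ => abs_nonneg _)
    (div_nonneg (by positivity) (sub_pos.2 h2α₀).le) hKC hsmall hdyadic
  have hlim : Tendsto (fun n : ℕ => B / n + K * ((n : ℝ) ^ α / n)) atTop (𝓝 0) := by
    simpa using (tendsto_const_div_atTop_nhds_zero_nat B).add
      ((tendsto_rpow_div_natCast_atTop hα₁).const_mul K)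
  filter_upwards [hlim.eventually (ge_mem_nhds hε), eventually_gt_atTop 0] with n hn hn₀
  have hβ : β = a m / m + D * ((m : ℝ) ^ α / m) := by
    simp only [β]; ring
  calc a n / n ≤ (β * n + B + K * (n : ℝ) ^ α) / n := by gcongr; exact hbound n hn₀
    _ = β + (B / n + K * ((n : ℝ) ^ α / n)) := by field_simp; ring
    _ ≤ _ := by rw [hβ]; linarith

theorem eventually_eventually_div_le (h : ApproxSubadditive a C α) (hC : 0 ≤ C)
    (hα₀ : 0 < α) (hα₁ : α < 1) {ε : ℝ} (hε : 0 < ε) :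
    ∀ᶠ m : ℕ in atTop, ∀ᶠ n : ℕ in atTop, a n / n ≤ a m / m + ε := by
  have hlim := (tendsto_rpow_div_natCast_atTop hα₁).const_mul (C * 2 ^ α / (2 - 2 ^ α))
  rw [mul_zero] at hlim
  filter_upwards [hlim.eventually (ge_mem_nhds (half_pos hε)), eventually_gt_atTop 0]
    with m hm hm₀
  filter_upwards [h.eventually_div_le hC hα₀ hα₁ hm₀ (half_pos hε)] with n hn
  linarith

end ApproxSubadditive

/-- Approximate Fekete lemma: for a nonnegative sequence with
`a (m+n) ≤ a m + a n + C (m+n)^{3/4}`, the limit of `a n / n` exists. -/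
theorem stmt_18 (a : ℕ → ℝ) (C : ℝ) (hC : 0 ≤ C)
    (ha0 : ∀ n, 0 ≤ a n)
    (hsub : ∀ m n : ℕ, 1 ≤ m → 1 ≤ n →
      a (m + n) ≤ a m + a n + C * ((m + n : ℝ)) ^ ((3 : ℝ) / 4)) :
    ∃ L : ℝ, Tendsto (fun n : ℕ => a n / n) atTop (nhds L) := by
  have h : ApproxSubadditive a C (3 / 4) := hsub
  exact exists_tendsto_of_eventually_le_add
    (isBoundedUnder_of ⟨0, fun n => div_nonneg (ha0 n) n.cast_nonneg⟩)
    fun ε hε => h.eventually_eventually_div_le hC (by norm_num) (by norm_num) hε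
end

section
/- Let B be a normed real vector space and d(x,y) := ‖x − y‖ the induced metric on a subset P ⊆ B that is closed under addition and nonnegative scalar multiplication. Then the metric d restricted to P is translation-invariant (d(x + z, y + z) = d(x, y)) and 1-homogeneous (d(λx, λy) = λ d(x,y) for λ ≥ 0). Conversely, if a convex cone P with an intrinsically given metric d is translation-invariant, 1-homogeneous, and complete, and addition is cancellative, then P embeds isometrically as a closed convex cone in a Banach space. -/
/-!
Part one is translation invariance and homogeneity of a norm. For the converse, cancellativity
makes `P` embed into its Grothendieck group `G`, on which `‖a - b‖ := d(a, b)` is well defined by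
translation invariance and is a group norm. The real scalar action `r • x := r⁺ • x - r⁻ • x`
extends the action of `ℝ≥0`, and homogeneity of `d` makes the norm absolutely homogeneous for it.
The completion of `G` is the Banach space; `P` has closed image, being complete and isometrically
embedded.
-/

open scoped NNReal

/-- An isometric embedding of a metric convex cone `P` as a closed convex cone
in a Banach space: a complete normed real vector space `B` together with an
isometric, additive, `ℝ≥0`-homogeneous map `f : P → B` with closed range. -/
structure BanachConeEmbedding (P : Type*) [AddCommMonoid P] [Module ℝ≥0 P]
    [MetricSpace P] where
  B : Type
  [instNorm : NormedAddCommGroup B]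
  [instSpace : NormedSpace ℝ B]
  complete : CompleteSpace B
  f : P → B
  isom : ∀ x y : P, dist (f x) (f y) = dist x y
  map_add : ∀ x y : P, f (x + y) = f x + f y
  map_smul : ∀ (c : ℝ≥0) (x : P), f (c • x) = (c : ℝ) • f x
  closedRange : IsClosed (Set.range f)

theorem Real.coe_toNNReal_sub_coe_toNNReal_neg (r : ℝ) :
    (r.toNNReal : ℝ) - (-r).toNNReal = r := by
  rw [Real.coe_toNNReal', Real.coe_toNNReal', max_zero_sub_max_neg_zero_eq_self]

namespace Module

variable {E : Type*} [AddCommGroup E] [Module ℝ≥0 E]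

theorem nnreal_smul_sub_smul_congr {p q p' q' : ℝ≥0} (h : (p : ℝ) - q = p' - q') (x : E) :
    p • x - q • x = p' • x - q' • x := by
  have hpq : p + q' = p' + q := by
    rw [← NNReal.coe_inj]
    push_cast
    linarith
  rw [sub_eq_sub_iff_add_eq_add, ← add_smul, ← add_smul, hpq]

def realSMulOfNNReal (r : ℝ) (x : E) : E := r.toNNReal • x - (-r).toNNReal • x

theorem realSMulOfNNReal_eq {r : ℝ} {p q : ℝ≥0} (h : (p : ℝ) - q = r) (x : E) :
    realSMulOfNNReal r x = p • x - q • x := by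
  refine nnreal_smul_sub_smul_congr ?_ x
  rw [h, Real.coe_toNNReal_sub_coe_toNNReal_neg]

theorem realSMulOfNNReal_coe (c : ℝ≥0) (x : E) : realSMulOfNNReal c x = c • x := by
  rw [realSMulOfNNReal_eq (p := c) (q := 0) (by simp), zero_smul, sub_zero]

theorem realSMulOfNNReal_neg (r : ℝ) (x : E) :
    realSMulOfNNReal (-r) x = -realSMulOfNNReal r x := by
  rw [realSMulOfNNReal, realSMulOfNNReal, neg_neg, neg_sub]

variable (E) in
abbrev realOfNNReal : Module ℝ E where
  smul := realSMulOfNNReal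
  one_smul x := by
    change realSMulOfNNReal 1 x = x
    simpa using realSMulOfNNReal_coe (1 : ℝ≥0) x
  mul_smul r s x := by
    change realSMulOfNNReal (r * s) x = realSMulOfNNReal r (realSMulOfNNReal s x)
    rw [realSMulOfNNReal_eq
      (p := r.toNNReal * s.toNNReal + (-r).toNNReal * (-s).toNNReal)
      (q := r.toNNReal * (-s).toNNReal + (-r).toNNReal * s.toNNReal)]
    · simp only [realSMulOfNNReal, smul_sub, add_smul, mul_smul]
      abel
    · push_cast
      linear_combination ((s.toNNReal : ℝ) - (-s).toNNReal) * r.coe_toNNReal_sub_coe_toNNReal_neg +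
        r * s.coe_toNNReal_sub_coe_toNNReal_neg
  smul_zero r := by
    change realSMulOfNNReal r 0 = 0
    simp [realSMulOfNNReal]
  smul_add r x y := by
    change realSMulOfNNReal r (x + y) = realSMulOfNNReal r x + realSMulOfNNReal r y
    simp only [realSMulOfNNReal, smul_add]
    abel
  add_smul r s x := by
    change realSMulOfNNReal (r + s) x = realSMulOfNNReal r x + realSMulOfNNReal s x
    rw [realSMulOfNNReal_eq
      (p := r.toNNReal + s.toNNReal) (q := (-r).toNNReal + (-s).toNNReal)]
    · simp only [realSMulOfNNReal, add_smul]
      abel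
    · push_cast
      linear_combination r.coe_toNNReal_sub_coe_toNNReal_neg + s.coe_toNNReal_sub_coe_toNNReal_neg
  zero_smul x := by
    change realSMulOfNNReal 0 x = 0
    simpa using realSMulOfNNReal_coe (0 : ℝ≥0) x

end Module

namespace NormedSpace

variable {E : Type*} [SeminormedAddCommGroup E] [Module ℝ≥0 E]

abbrev realOfNNReal (h : ∀ (c : ℝ≥0) (x : E), ‖c • x‖ = c * ‖x‖) : NormedSpace ℝ E where
  __ := Module.realOfNNReal E
  norm_smul_le r x := by
    change ‖Module.realSMulOfNNReal r x‖ ≤ ‖r‖ * ‖x‖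
    rcases le_total 0 r with hr | hr
    · lift r to ℝ≥0 using hr
      simp [Module.realSMulOfNNReal_coe, h]
    · obtain ⟨c, rfl⟩ : ∃ c : ℝ≥0, -(c : ℝ) = r := ⟨(-r).toNNReal, by simp [hr]⟩
      simp [Module.realSMulOfNNReal_neg, Module.realSMulOfNNReal_coe, h]

end NormedSpace

section TranslationInvariant

variable {M : Type*} [AddCommMonoid M] [PseudoMetricSpace M]

theorem dist_eq_dist_of_add_eq_add (htrans : ∀ x y z : M, dist (x + z) (y + z) = dist x y)
    {a b c d : M} (h : a + d = c + b) : dist a b = dist c d := by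
  rw [← htrans a b d, h, add_comm b d, htrans]

theorem dist_add_add_le_of_translation_invariant
    (htrans : ∀ x y z : M, dist (x + z) (y + z) = dist x y) (a b c d : M) :
    dist (a + c) (b + d) ≤ dist a b + dist c d :=
  calc dist (a + c) (b + d) ≤ dist (a + c) (b + c) + dist (b + c) (b + d) := dist_triangle ..
    _ = dist a b + dist c d := by rw [htrans, add_comm b c, add_comm b d, htrans]

end TranslationInvariant

namespace Algebra.GrothendieckAddGroup

variable {M N H : Type*} [AddCommMonoid M] [AddCommMonoid N] [AddCommGroup H]

@[simp]
theorem lift_of (f : M →+ H) (x : M) : lift f (of x) = f x := by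
  rw [← AddMonoidHom.comp_apply, ← lift_symm_apply, Equiv.symm_apply_apply]

theorem of_sub_of (a b : M) : of a - of b = AddLocalization.mk a ⟨b, AddSubmonoid.mem_top b⟩ := by
  change AddLocalization.mk _ 0 - AddLocalization.mk _ 0 = _
  rw [mk_sub_mk]
  congr 1 <;> simp

theorem exists_of_sub_of (x : GrothendieckAddGroup M) : ∃ a b : M, x = of a - of b := by
  induction x using AddLocalization.ind with | H y =>
  exact ⟨y.1, y.2, (of_sub_of _ _).symm⟩

noncomputable def map (f : M →+ N) : GrothendieckAddGroup M →+ GrothendieckAddGroup N :=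
  lift (of.comp f)

theorem map_of (f : M →+ N) (x : M) : map f (of x) = of (f x) := by
  rw [map, lift_of, AddMonoidHom.comp_apply]

variable {R : Type*} [Semiring R] [Module R M]

noncomputable instance : SMul R (GrothendieckAddGroup M) :=
  ⟨fun c => map (DistribSMul.toAddMonoidHom M c)⟩

theorem smul_of (c : R) (x : M) : c • of x = of (c • x) :=
  map_of _ x

noncomputable instance : Module R (GrothendieckAddGroup M) :=
  Function.Surjective.module R (of.comp (AddMonoidHom.fst M M) - of.comp (AddMonoidHom.snd M M))
    (fun x => by
      obtain ⟨a, b, rfl⟩ := exists_of_sub_of x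
      exact ⟨(a, b), rfl⟩)
    (fun c p => by
      change _ = map _ (of p.1 - of p.2)
      rw [map_sub, map_of, map_of]
      rfl)

section Norm

variable [IsCancelAdd M] [MetricSpace M]

noncomputable def normOfDistFun (htrans : ∀ x y z : M, dist (x + z) (y + z) = dist x y)
    (x : GrothendieckAddGroup M) : ℝ :=
  AddLocalization.liftOn x (fun a b => dist a (b : M)) fun h => by
    obtain ⟨e, he⟩ := AddLocalization.r_iff_exists.1 h
    exact dist_eq_dist_of_add_eq_add htrans (by simpa [add_comm] using he)

theorem normOfDistFun_of_sub_of (htrans : ∀ x y z : M, dist (x + z) (y + z) = dist x y)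
    (a b : M) : normOfDistFun htrans (of a - of b) = dist a b := by
  rw [of_sub_of]
  rfl

noncomputable def normOfDist (htrans : ∀ x y z : M, dist (x + z) (y + z) = dist x y) :
    AddGroupNorm (GrothendieckAddGroup M) where
  toFun := normOfDistFun htrans
  map_zero' := by rw [← sub_self (of 0), normOfDistFun_of_sub_of, dist_self]
  add_le' x y := by
    obtain ⟨a, b, rfl⟩ := exists_of_sub_of x
    obtain ⟨c, d, rfl⟩ := exists_of_sub_of y
    rw [show of a - of b + (of c - of d) = of (a + c) - of (b + d) by simp only [map_add]; abel]
    simp only [normOfDistFun_of_sub_of]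
    exact dist_add_add_le_of_translation_invariant htrans a b c d
  neg' x := by
    obtain ⟨a, b, rfl⟩ := exists_of_sub_of x
    rw [neg_sub, normOfDistFun_of_sub_of, normOfDistFun_of_sub_of, dist_comm]
  eq_zero_of_map_eq_zero' x hx := by
    obtain ⟨a, b, rfl⟩ := exists_of_sub_of x
    rw [normOfDistFun_of_sub_of, dist_eq_zero] at hx
    rw [hx, sub_self]

theorem normOfDist_of_sub_of (htrans : ∀ x y z : M, dist (x + z) (y + z) = dist x y) (a b : M) :
    normOfDist htrans (of a - of b) = dist a b :=
  normOfDistFun_of_sub_of htrans a b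

theorem normOfDist_nnreal_smul [Module ℝ≥0 M]
    (htrans : ∀ x y z : M, dist (x + z) (y + z) = dist x y)
    (hhom : ∀ (c : ℝ≥0) (x y : M), dist (c • x) (c • y) = c * dist x y)
    (c : ℝ≥0) (x : GrothendieckAddGroup M) :
    normOfDist htrans (c • x) = c * normOfDist htrans x := by
  obtain ⟨a, b, rfl⟩ := exists_of_sub_of x
  rw [smul_sub, smul_of, smul_of, normOfDist_of_sub_of, normOfDist_of_sub_of, hhom]

end Norm

end Algebra.GrothendieckAddGroup

namespace BanachConeEmbedding

open Algebra Algebra.GrothendieckAddGroup UniformSpace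

noncomputable def ofGrothendieck (P : Type) [AddCommMonoid P] [IsCancelAdd P] [Module ℝ≥0 P]
    [MetricSpace P] [CompleteSpace P] (htrans : ∀ x y z : P, dist (x + z) (y + z) = dist x y)
    (hhom : ∀ (c : ℝ≥0) (x y : P), dist (c • x) (c • y) = c * dist x y) :
    BanachConeEmbedding P :=
  -- Stated before the real structure is installed: afterwards `c • _` would elaborate through
  -- `NNReal.instModuleOfReal`, which is not definitionally the action we started from.
  have hsmul (c : ℝ≥0) (x : P) :
      Module.realSMulOfNNReal (c : ℝ) (of x : GrothendieckAddGroup P) = of (c • x) := by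
    rw [Module.realSMulOfNNReal_coe, smul_of]
  letI := (normOfDist htrans).toNormedAddCommGroup
  letI := NormedSpace.realOfNNReal (normOfDist_nnreal_smul htrans hhom)
  have hdist (x y : P) : dist (of x : Completion (GrothendieckAddGroup P)) (of y) = dist x y := by
    rw [Completion.dist_eq, dist_eq_norm]
    exact normOfDist_of_sub_of htrans x y
  { B := Completion (GrothendieckAddGroup P)
    complete := inferInstance
    f x := of x
    isom := hdist
    map_add x y := by rw [_root_.map_add, Completion.coe_add]
    map_smul c x := by
      rw [← Completion.coe_smul]
      exact congrArg _ (hsmul c x).symm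
    closedRange := (Isometry.of_dist_eq hdist).isClosedEmbedding.isClosed_range }

end BanachConeEmbedding

/-- (1) On a subset of a normed space closed under addition and nonnegative
scaling, the norm metric is translation-invariant and `1`-homogeneous.
(2) Conversely, a cancellative convex cone with a complete,
translation-invariant, `1`-homogeneous metric embeds isometrically as a
closed convex cone in a Banach space. -/
theorem stmt_19 :
    (∀ (B : Type) (_ : NormedAddCommGroup B), ∀ (_ : NormedSpace ℝ B) (P : Set B),
      (∀ x ∈ P, ∀ y ∈ P, x + y ∈ P) →
      (∀ c : ℝ, 0 ≤ c → ∀ x ∈ P, c • x ∈ P) →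
      (∀ x ∈ P, ∀ y ∈ P, ∀ z ∈ P, dist (x + z) (y + z) = dist x y) ∧
      (∀ c : ℝ, 0 ≤ c → ∀ x ∈ P, ∀ y ∈ P, dist (c • x) (c • y) = c * dist x y)) ∧
    (∀ (P : Type) (_ : AddCommMonoid P) (_ : IsCancelAdd P) (_ : Module ℝ≥0 P)
        (_ : MetricSpace P) (_ : CompleteSpace P),
      (∀ x y z : P, dist (x + z) (y + z) = dist x y) →
      (∀ (c : ℝ≥0) (x y : P), dist (c • x) (c • y) = (c : ℝ) * dist x y) →
      Nonempty (BanachConeEmbedding P)) := by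
  refine ⟨fun B _ _ P _ _ => ⟨fun x _ y _ z _ => dist_add_right x y z, ?_⟩, ?_⟩
  · intro c hc x _ y _
    rw [dist_smul₀, Real.norm_of_nonneg hc]
  · intro P _ _ _ _ _ htrans hhom
    exact ⟨BanachConeEmbedding.ofGrothendieck P htrans hhom⟩
end
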